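/- Fix ε ∈ (0,1) and γ > 0, and set c_ε = γε. Let G′ be an (n, ε, γ)-good graph on N vertices, and let S_1, …, S_k be a connected partition of V(G′) such that S_k has the largest size among the blocks and the blocks S_1, …, S_{k−1} form exactly one super-block. For each i ∈ [k−1] let s_i = |S_i|; let E′ be the set of edges of G′ with endpoints in two different blocks, V′ the number of vertices incident to at least one edge of E′, C_2 the number of connected components with more than one vertex of the subgraph spanned by E′, and C_1 = k − 1. Suppose that s_1 + ⋯ + s_{k−1} ≤ N/2 and that at least one of S_1, …, S_{k−1} contains a vertex of degree at least 3 in G′. Then V′ − C_2 − C_1 ≥ c_ε(s_1 + ⋯ + s_{k−1})/(400 log log n), and V′ − C_2 − C_1 ≥ 2. -/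

import Mathlib

/-- The set of edges of `G` with exactly one endpoint in `S`. -/
def edgeBoundary {V : Type*} (G : SimpleGraph V) (S : Set V) : Set (Sym2 V) :=
  {e | ∃ a b, e = s(a, b) ∧ G.Adj a b ∧ a ∈ S ∧ b ∉ S}

/-- `G` is an `α`-expander. -/
def IsExpander {V : Type*} [Fintype V] (G : SimpleGraph V) (α : ℝ) : Prop :=
  ∀ S : Finset V, S.Nonempty → 2 * S.card ≤ Fintype.card V →
    α * (∑ v ∈ S, (Nat.card (G.neighborSet v) : ℝ)) ≤ (Nat.card (edgeBoundary G ↑S) : ℝ)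

/-- `H` is an `(n, ε, γ)`-good graph. -/
def IsGood (n : ℕ) (ε γ : ℝ) {V : Type*} [Fintype V] (H : SimpleGraph V) : Prop :=
  ((ε ^ 3 * n / 10 ^ 5 : ℝ) ≤ (Nat.card {v : V // 3 ≤ Nat.card (H.neighborSet v)} : ℝ)) ∧
  IsExpander H (γ * ε) ∧
  (∀ (v : V) (w : H.Walk v v), w.IsCycle → Real.log n / (2 * ε) < (w.length : ℝ)) ∧
  (∀ (u v : V) (w : H.Walk u v), w.IsPath →
      (∀ x ∈ w.support, x ≠ u → x ≠ v → Nat.card (H.neighborSet x) = 2) →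
      (w.length : ℝ) < 1 / (γ * ε)) ∧
  (∀ v : V, (Nat.card (H.neighborSet v) : ℝ) ≤ 100 * Real.log (Real.log n) ∧
      2 ≤ Nat.card (H.neighborSet v)) ∧
  (∀ S : Set V, S.Nonempty → S ≠ Set.univ → 2 ≤ Nat.card (edgeBoundary H S)) ∧
  (∀ S : Set V, 2 * Nat.card S ≤ Fintype.card V →
      (∃ v ∈ S, 3 ≤ Nat.card (H.neighborSet v)) →
      3 ≤ Nat.card {v : V // v ∉ S ∧ ∃ u ∈ S, H.Adj u v})

/-- `P` is a connected partition of the vertex set of `G` (blocks are the fibers of `P`). -/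
def ConnPartition {V : Type*} (G : SimpleGraph V) {k : ℕ} (P : V → Fin k) : Prop :=
  Function.Surjective P ∧ ∀ i : Fin k, (SimpleGraph.induce (P ⁻¹' {i}) G).Connected

/-- The set of edges of `G` whose endpoints lie in two different blocks of `P`. -/
def crossSet {V : Type*} (G : SimpleGraph V) {k : ℕ} (P : V → Fin k) : Set (Sym2 V) :=
  {e | e ∈ G.edgeSet ∧ ¬ (e.map P).IsDiag}

/-- The subgraph spanned by the cross edges of `P`. -/
def spannedGraph {V : Type*} (G : SimpleGraph V) {k : ℕ} (P : V → Fin k) : SimpleGraph V :=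
  SimpleGraph.fromEdgeSet (crossSet G P)

/-- `V'`: the number of vertices incident to at least one cross edge. -/
noncomputable def Vprime {V : Type*} (G : SimpleGraph V) {k : ℕ} (P : V → Fin k) : ℕ :=
  Nat.card {v : V // ∃ e ∈ crossSet G P, v ∈ e}

/-- `C₂`: the number of connected components with more than one vertex of the subgraph
spanned by the cross edges. -/
noncomputable def C2count {V : Type*} (G : SimpleGraph V) {k : ℕ} (P : V → Fin k) : ℕ :=
  Nat.card {c : (spannedGraph G P).ConnectedComponent //
    ∃ v w : V, v ≠ w ∧ (spannedGraph G P).connectedComponentMk v = c ∧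
      (spannedGraph G P).connectedComponentMk w = c}

/-- The auxiliary graph on the blocks other than the last: two blocks are adjacent when
there is at least one edge of `H` between them.  The partition has exactly one super-block
iff this graph is connected. -/
def auxGraph {V : Type*} (H : SimpleGraph V) {k : ℕ} (P : V → Fin (k + 1)) :
    SimpleGraph {i : Fin (k + 1) // i ≠ Fin.last k} where
  Adj i j := i ≠ j ∧ ∃ a b, H.Adj a b ∧ P a = i.1 ∧ P b = j.1
  symm := ⟨fun _ _ ⟨hij, a, b, hab, ha, hb⟩ => ⟨hij.symm, b, a, hab.symm, hb, ha⟩⟩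
  loopless := ⟨fun _ h => h.1 rfl⟩

/-!
Let `W` be the union of the non-last blocks. The non-last blocks and the nontrivial components
of the graph of cross edges form a bipartite incidence graph, which is connected because the
blocks form a single super-block; its edges are witnessed by distinct cross vertices in `W`, so
`C₁ + C₂ ≤ |V' ∩ W| + 1`. Every vertex outside `W` with a neighbour in `W` is a cross vertex, so
if `m` is the number of such vertices then `V' - C₂ - C₁ ≥ m - 1`. Property (7) gives `m ≥ 3`,
and expansion together with the degree bounds gives `2γε|W| ≤ e(W, Wᶜ) ≤ 100 log log n · m`.
-/

open SimpleGraph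

def outerBoundary {V : Type*} (G : SimpleGraph V) (S : Set V) : Set V :=
  {v | v ∉ S ∧ ∃ u ∈ S, G.Adj u v}

lemma card_edgeBoundary_le_mul_card_outerBoundary {V : Type*} [Finite V] (G : SimpleGraph V)
    (S : Set V) {Δ : ℝ} (hΔ : ∀ v, (Nat.card (G.neighborSet v) : ℝ) ≤ Δ) :
    (Nat.card (edgeBoundary G S) : ℝ) ≤ Δ * Nat.card (outerBoundary G S) := by
  classical
  set T := (Set.toFinite (outerBoundary G S)).toFinset
  have hsub : edgeBoundary G S ⊆ ⋃ v ∈ T, G.incidenceSet v := by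
    rintro _ ⟨a, b, rfl, hab, ha, hb⟩
    exact Set.mem_biUnion (by simpa [T] using ⟨hb, a, ha, hab⟩) ⟨hab, Sym2.mem_mk_right a b⟩
  have hcard : Nat.card (edgeBoundary G S) ≤ ∑ v ∈ T, Nat.card (G.neighborSet v) := by
    rw [Nat.card_coe_set_eq]
    refine (Set.ncard_le_ncard hsub).trans ((T.set_ncard_biUnion_le _).trans_eq ?_)
    exact Finset.sum_congr rfl fun v _ ↦
      (Nat.card_coe_set_eq _).symm.trans (Nat.card_congr (G.incidenceSetEquivNeighborSet v))
  calc (Nat.card (edgeBoundary G S) : ℝ) ≤ ∑ v ∈ T, (Nat.card (G.neighborSet v) : ℝ) := by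
        exact_mod_cast hcard
    _ ≤ ∑ _v ∈ T, Δ := Finset.sum_le_sum fun v _ ↦ hΔ v
    _ = Δ * Nat.card (outerBoundary G S) := by
        rw [Finset.sum_const, nsmul_eq_mul, mul_comm, Nat.card_coe_set_eq,
          Set.ncard_eq_toFinset_card _ (Set.toFinite _)]

lemma IsExpander.mul_two_mul_card_le {V : Type*} [Fintype V] {G : SimpleGraph V} {α : ℝ}
    (hG : IsExpander G α) (hα : 0 ≤ α) (hmin : ∀ v, 2 ≤ Nat.card (G.neighborSet v))
    {S : Set V} (hS : S.Nonempty) (hsize : 2 * Nat.card S ≤ Fintype.card V) :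
    α * (2 * Nat.card S) ≤ Nat.card (edgeBoundary G S) := by
  set T := (Set.toFinite S).toFinset
  have hTS : (T : Set V) = S := Set.Finite.coe_toFinset _
  have hcardT : T.card = Nat.card S := by
    rw [Nat.card_coe_set_eq, Set.ncard_eq_toFinset_card _ (Set.toFinite S)]
  have hdeg : (2 * Nat.card S : ℝ) ≤ ∑ v ∈ T, (Nat.card (G.neighborSet v) : ℝ) := by
    have := Finset.card_nsmul_le_sum T (fun v ↦ (Nat.card (G.neighborSet v) : ℝ)) 2
      fun v _ ↦ by exact_mod_cast hmin v
    rwa [nsmul_eq_mul, hcardT, mul_comm] at this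
  have hexp := hG T (by simpa [T] using hS) (hcardT ▸ hsize)
  rw [hTS] at hexp
  exact (mul_le_mul_of_nonneg_left hdeg hα).trans hexp

def incidenceGraph {α β : Type*} (r : α → β → Prop) : SimpleGraph (α ⊕ β) :=
  SimpleGraph.fromRel fun x y ↦ ∃ a b, x = .inl a ∧ y = .inr b ∧ r a b

namespace incidenceGraph

variable {α β : Type*} {r : α → β → Prop}

lemma adj_inl_inr {a : α} {b : β} : (incidenceGraph r).Adj (.inl a) (.inr b) ↔ r a b := by
  simp [incidenceGraph]

lemma card_edgeSet_le [Finite α] [Finite β] :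
    Nat.card (incidenceGraph r).edgeSet ≤ Nat.card {p : α × β // r p.1 p.2} := by
  refine Nat.card_le_card_of_surjective
    (fun p ↦ ⟨s(.inl p.1.1, .inr p.1.2), adj_inl_inr.mpr p.2⟩) ?_
  rintro ⟨e, he⟩
  induction e using Sym2.ind with
  | _ x y =>
    rcases x with a | b <;> rcases y with a' | b' <;> simp [incidenceGraph] at he
    · exact ⟨⟨(a, b'), he⟩, rfl⟩
    · exact ⟨⟨(a', b), he⟩, Subtype.ext Sym2.eq_swap⟩

lemma connected (G : SimpleGraph α) (hG : G.Connected)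
    (hadj : ∀ a a', G.Adj a a' → ∃ b, r a b ∧ r a' b) (hβ : ∀ b, ∃ a, r a b) :
    (incidenceGraph r).Connected := by
  have hα : ∀ a a', (incidenceGraph r).Reachable (.inl a) (.inl a') := by
    intro a a'
    rw [reachable_iff_reflTransGen]
    refine Relation.ReflTransGen.lift' Sum.inl (fun x y hxy ↦ ?_) a a'
      ((reachable_iff_reflTransGen _ _).mp (hG.preconnected a a'))
    obtain ⟨b, hxb, hyb⟩ := hadj x y hxy
    exact .tail (.single (adj_inl_inr.mpr hxb)) (adj_inl_inr.mpr hyb).symm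
  have hb : ∀ b, ∃ a, (incidenceGraph r).Reachable (.inl a) (.inr b) := by
    intro b
    obtain ⟨a, hab⟩ := hβ b
    exact ⟨a, (adj_inl_inr.mpr hab).reachable⟩
  have : Nonempty α := hG.nonempty
  refine ⟨fun x y ↦ ?_⟩
  obtain ⟨a, hxa⟩ : ∃ a, (incidenceGraph r).Reachable (.inl a) x := by
    rcases x with a | b
    exacts [⟨a, .rfl⟩, hb b]
  obtain ⟨a', hya⟩ : ∃ a, (incidenceGraph r).Reachable (.inl a) y := by
    rcases y with a | b
    exacts [⟨a, .rfl⟩, hb b]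
  exact hxa.symm.trans ((hα a a').trans hya)

lemma card_add_card_le [Finite α] [Finite β] (h : (incidenceGraph r).Connected) :
    Nat.card α + Nat.card β ≤ Nat.card {p : α × β // r p.1 p.2} + 1 := by
  rw [← Nat.card_sum]
  exact h.card_vert_le_card_edgeSet_add_one.trans (Nat.add_le_add_right card_edgeSet_le 1)

end incidenceGraph

def nontrivialComponents {V : Type*} (H : SimpleGraph V) : Set H.ConnectedComponent :=
  {c | ∃ v w, v ≠ w ∧ H.connectedComponentMk v = c ∧ H.connectedComponentMk w = c}

lemma connectedComponentMk_mem_nontrivialComponents_iff {V : Type*} {H : SimpleGraph V}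
    {v : V} : H.connectedComponentMk v ∈ nontrivialComponents H ↔ v ∈ H.support := by
  constructor
  · rintro ⟨x, y, hxy, hx, hy⟩
    obtain ⟨z, hvz, hz⟩ : ∃ z, v ≠ z ∧ H.connectedComponentMk z = H.connectedComponentMk v := by
      rcases eq_or_ne v x with rfl | hvx
      exacts [⟨y, hxy, hy⟩, ⟨x, hvx, hx⟩]
    obtain ⟨p⟩ := ConnectedComponent.eq.mp hz.symm
    exact (p.adj_snd (p.not_nil_of_ne hvz)).mem_support_left
  · rintro ⟨w, hvw⟩
    exact ⟨v, w, hvw.ne, rfl, ConnectedComponent.eq.mpr hvw.symm.reachable⟩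

section Partition

variable {V : Type*} (G : SimpleGraph V) {k : ℕ} (P : V → Fin (k + 1))

lemma mk_mem_crossSet {a b : V} : s(a, b) ∈ crossSet G P ↔ G.Adj a b ∧ P a ≠ P b := by
  simp [crossSet]

lemma spannedGraph_adj {a b : V} : (spannedGraph G P).Adj a b ↔ G.Adj a b ∧ P a ≠ P b := by
  simp only [spannedGraph, fromEdgeSet_adj, mk_mem_crossSet]
  exact ⟨And.left, fun h ↦ ⟨h, h.1.ne⟩⟩

lemma Vprime_eq_card_support : Vprime G P = Nat.card (spannedGraph G P).support := by
  refine Nat.card_congr (Equiv.subtypeEquivRight fun v ↦ ?_)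
  rw [mem_support]
  constructor
  · rintro ⟨e, he, hve⟩
    obtain ⟨w, rfl⟩ := Sym2.mem_iff_exists.mp hve
    exact ⟨w, (spannedGraph_adj G P).mpr ((mk_mem_crossSet G P).mp he)⟩
  · rintro ⟨w, hvw⟩
    exact ⟨s(v, w), (mk_mem_crossSet G P).mpr ((spannedGraph_adj G P).mp hvw),
      Sym2.mem_mk_left v w⟩

lemma outerBoundary_subset_support_diff :
    outerBoundary G (P ⁻¹' {Fin.last k})ᶜ ⊆
      (spannedGraph G P).support \ (P ⁻¹' {Fin.last k})ᶜ := by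
  rintro v ⟨hv, u, hu, huv⟩
  have hPv : P v = Fin.last k := by simpa using hv
  exact ⟨⟨u, (spannedGraph_adj G P).mpr ⟨huv.symm, hPv ▸ Ne.symm hu⟩⟩, hv⟩

def blockMeetsComponent (i : {i : Fin (k + 1) // i ≠ Fin.last k})
    (c : nontrivialComponents (spannedGraph G P)) : Prop :=
  ∃ v, P v = i ∧ (spannedGraph G P).connectedComponentMk v = c

lemma exists_blockMeetsComponent (c : nontrivialComponents (spannedGraph G P)) :
    ∃ i, blockMeetsComponent G P i c := by
  rcases c with ⟨_, x, y, hxy, rfl, hy⟩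
  obtain ⟨u, hxu⟩ :=
    connectedComponentMk_mem_nontrivialComponents_iff.mp ⟨x, y, hxy, rfl, hy⟩
  have hPxu := ((spannedGraph_adj G P).mp hxu).2
  by_cases hx : P x = Fin.last k
  · exact ⟨⟨P u, fun h ↦ hPxu (hx.trans h.symm)⟩, u, rfl,
      ConnectedComponent.eq.mpr hxu.symm.reachable⟩
  · exact ⟨⟨P x, hx⟩, x, rfl, rfl⟩

lemma incidenceGraph_blockMeetsComponent_connected (hsuper : (auxGraph G P).Connected) :
    (incidenceGraph (blockMeetsComponent G P)).Connected := by
  refine incidenceGraph.connected _ hsuper (fun i j hij ↦ ?_) (exists_blockMeetsComponent G P)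
  obtain ⟨hne, a, b, hab, ha, hb⟩ := hij
  have hadj : (spannedGraph G P).Adj a b :=
    (spannedGraph_adj G P).mpr ⟨hab, fun h ↦ hne (Subtype.ext (ha ▸ hb ▸ h))⟩
  exact ⟨⟨_, connectedComponentMk_mem_nontrivialComponents_iff.mpr ⟨b, hadj⟩⟩,
    ⟨a, ha, rfl⟩, ⟨b, hb, ConnectedComponent.eq.mpr hadj.symm.reachable⟩⟩

lemma card_blockMeetsComponent_le [Finite V] :
    Nat.card {p : {i : Fin (k + 1) // i ≠ Fin.last k} × nontrivialComponents (spannedGraph G P) //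
      blockMeetsComponent G P p.1 p.2} ≤
      Nat.card ↥((spannedGraph G P).support ∩ (P ⁻¹' {Fin.last k})ᶜ) := by
  refine Nat.card_le_card_of_surjective (fun v ↦ ⟨(⟨P v, v.2.2⟩,
    ⟨_, connectedComponentMk_mem_nontrivialComponents_iff.mpr v.2.1⟩), v, rfl, rfl⟩) ?_
  rintro ⟨⟨i, c⟩, v, hvi, hvc⟩
  have hv : v ∈ (spannedGraph G P).support :=
    connectedComponentMk_mem_nontrivialComponents_iff.mp (hvc ▸ c.2)
  have hvW : P v ≠ Fin.last k := hvi ▸ i.2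
  exact ⟨⟨v, hv, hvW⟩, Subtype.ext (Prod.ext (Subtype.ext hvi) (Subtype.ext hvc))⟩

lemma add_C2count_le [Finite V] (hsuper : (auxGraph G P).Connected) :
    k + C2count G P ≤ Nat.card ↥((spannedGraph G P).support ∩ (P ⁻¹' {Fin.last k})ᶜ) + 1 := by
  have hblocks : Nat.card {i : Fin (k + 1) // i ≠ Fin.last k} = k := by
    simp [Nat.card_eq_fintype_card, Fintype.card_subtype_compl]
  have hcomponents : Nat.card (nontrivialComponents (spannedGraph G P)) = C2count G P := rfl
  rw [← hcomponents]
  nth_rewrite 1 [← hblocks]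
  exact (incidenceGraph.card_add_card_le
    (incidenceGraph_blockMeetsComponent_connected G P hsuper)).trans
    (Nat.add_le_add_right (card_blockMeetsComponent_le G P) 1)

lemma add_C2count_add_card_outerBoundary_le [Finite V] (hsuper : (auxGraph G P).Connected) :
    k + C2count G P + Nat.card (outerBoundary G (P ⁻¹' {Fin.last k})ᶜ) ≤ Vprime G P + 1 := by
  have hsplit := Set.ncard_inter_add_ncard_sdiff_eq_ncard (spannedGraph G P).support
    (P ⁻¹' {Fin.last k})ᶜ
  have houter := Set.ncard_le_ncard (outerBoundary_subset_support_diff G P)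
  have hblocks := add_C2count_le G P hsuper
  rw [Vprime_eq_card_support]
  simp only [Nat.card_coe_set_eq] at hblocks ⊢
  omega

end Partition

theorem stmt11_general (ε γ : ℝ) (hε0 : 0 < ε) (hγ : 0 < γ)
    (n N k : ℕ) {V : Type*} [Fintype V] (hN : Fintype.card V = N)
    (G' : SimpleGraph V) (hgood : IsGood n ε γ G')
    (P : V → Fin (k + 1))
    (hsuper : (auxGraph G' P).Connected)
    (hsmall : (Nat.card {v : V // P v ≠ Fin.last k} : ℝ) ≤ (N : ℝ) / 2)
    (hdeg3 : ∃ v : V, P v ≠ Fin.last k ∧ 3 ≤ Nat.card (G'.neighborSet v)) :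
    (γ * ε) * (Nat.card {v : V // P v ≠ Fin.last k} : ℝ) / (400 * Real.log (Real.log n)) ≤
      (((Vprime G' P : ℤ) - (C2count G' P : ℤ) - (k : ℤ) : ℤ) : ℝ) ∧
    (2 : ℤ) ≤ (Vprime G' P : ℤ) - (C2count G' P : ℤ) - (k : ℤ) := by
  obtain ⟨-, hexp, -, -, hdeg, -, hnbhd⟩ := hgood
  obtain ⟨v₀, hv₀, hv₀deg⟩ := hdeg3
  set W : Set V := (P ⁻¹' {Fin.last k})ᶜ
  set s : ℕ := Nat.card W
  set m : ℕ := Nat.card (outerBoundary G' W)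
  set Λ : ℝ := Real.log (Real.log n)
  have hs : Nat.card {v : V // P v ≠ Fin.last k} = s := rfl
  have hsize : 2 * s ≤ Fintype.card V := by
    rw [hs] at hsmall
    rw [hN]
    exact_mod_cast (by linarith : (2 * s : ℝ) ≤ N)
  have hm : 3 ≤ m := hnbhd W hsize ⟨v₀, hv₀, hv₀deg⟩
  have hcount : k + C2count G' P + m ≤ Vprime G' P + 1 :=
    add_C2count_add_card_outerBoundary_le G' P hsuper
  have hΛ : 0 < Λ := by
    have : (2 : ℝ) ≤ Nat.card (G'.neighborSet v₀) := by exact_mod_cast (hdeg v₀).2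
    linarith [(hdeg v₀).1]
  have hexpand : γ * ε * (2 * s) ≤ 100 * Λ * m :=
    (hexp.mul_two_mul_card_le (by positivity) (fun v ↦ (hdeg v).2) ⟨v₀, hv₀⟩ hsize).trans
      (card_edgeBoundary_le_mul_card_outerBoundary G' W fun v ↦ (hdeg v).1)
  set R : ℤ := (Vprime G' P : ℤ) - (C2count G' P : ℤ) - (k : ℤ)
  have hmR : (m : ℤ) ≤ R + 1 := by omega
  have hR : (2 : ℤ) ≤ R := by omega
  refine ⟨?_, hR⟩
  rw [hs, div_le_iff₀ (by positivity)]
  have hmR' : (m : ℝ) ≤ R + 1 := by exact_mod_cast hmR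
  have hR' : (2 : ℝ) ≤ R := by exact_mod_cast hR
  calc γ * ε * s ≤ 50 * Λ * m := by linarith
    _ ≤ 50 * Λ * (R + 1) := by gcongr
    _ ≤ R * (400 * Λ) := by nlinarith

/-- First technical estimate: if the non-last blocks of a connected partition of an
`(n,ε,γ)`-good graph (forming a single super-block, one of them containing a vertex of degree
at least 3) have total size at most `N/2`, then
`V' - C₂ - C₁ ≥ c_ε (s₁+⋯+s_{k-1}) / (400 log log n)` and `V' - C₂ - C₁ ≥ 2`
(here the partition has `k+1` blocks, so `C₁ = k`). -/
theorem stmt11 (ε γ : ℝ) (hε0 : 0 < ε) (hε1 : ε < 1) (hγ : 0 < γ)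
    (n N k : ℕ) {V : Type*} [Fintype V] (hN : Fintype.card V = N)
    (G' : SimpleGraph V) (hgood : IsGood n ε γ G')
    (P : V → Fin (k + 1)) (hpart : ConnPartition G' P)
    (hlast : ∀ i : Fin (k + 1),
      Nat.card (P ⁻¹' {i} : Set V) ≤ Nat.card (P ⁻¹' {Fin.last k} : Set V))
    (hsuper : (auxGraph G' P).Connected)
    (hsmall : (Nat.card {v : V // P v ≠ Fin.last k} : ℝ) ≤ (N : ℝ) / 2)
    (hdeg3 : ∃ v : V, P v ≠ Fin.last k ∧ 3 ≤ Nat.card (G'.neighborSet v)) :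
    (γ * ε) * (Nat.card {v : V // P v ≠ Fin.last k} : ℝ) / (400 * Real.log (Real.log n)) ≤
      (((Vprime G' P : ℤ) - (C2count G' P : ℤ) - (k : ℤ) : ℤ) : ℝ) ∧
    (2 : ℤ) ≤ (Vprime G' P : ℤ) - (C2count G' P : ℤ) - (k : ℤ) :=
  stmt11_general ε γ hε0 hγ n N k hN G' hgood P hsuper hsmall hdeg3
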